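/- Let (a,b) be a right coprime pair in R such that aR ∩ bR is not contained in J(R). Then there exists a right coprime pair (x,y) with xR ⊆ aR, yR ⊆ bR, (xR, yR) ≠ (aR, bR), and moreover x = a or y = b. -/
import Mathlib


/-- The cyclic right ideal `aR`, as a submodule of `R` over `Rᵐᵒᵖ`. -/
def rspan (R : Type*) [Ring R] (a : R) : Submodule Rᵐᵒᵖ R := Submodule.span Rᵐᵒᵖ {a}

lemma mem_rspan_iff {R : Type*} [Ring R] {a x : R} :
    x ∈ rspan R a ↔ ∃ t : R, x = a * t := by
  rw [rspan, Submodule.mem_span_singleton]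
  constructor
  · rintro ⟨r, rfl⟩
    exact ⟨r.unop, rfl⟩
  · rintro ⟨t, rfl⟩
    exact ⟨MulOpposite.op t, rfl⟩

lemma rspan_le_of_exists {R : Type*} [Ring R] {a x : R} (h : ∃ t : R, x = a * t) :
    rspan R x ≤ rspan R a := by
  rw [rspan, Submodule.span_le, Set.singleton_subset_iff]
  exact mem_rspan_iff.2 h

/-- Jacobson's trick: if `1 - p*q` is right invertible, so is `1 - q*p`. -/
lemma jacobson_trick {R : Type*} [Ring R] {p q : R}
    (h : ∃ e : R, (1 - p * q) * e = 1) : ∃ e : R, (1 - q * p) * e = 1 := by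
  obtain ⟨e, he⟩ := h
  refine ⟨1 + q * e * p, ?_⟩
  calc (1 - q * p) * (1 + q * e * p)
      = 1 - q * p + q * ((1 - p * q) * e) * p := by noncomm_ring
    _ = 1 := by rw [he]; noncomm_ring

/-- If `1 - c * d` is right invertible for every `d`, then `c` is in the Jacobson radical. -/
lemma mem_jacobson_of_forall {R : Type*} [Ring R] {c : R}
    (H : ∀ d : R, ∃ e : R, (1 - c * d) * e = 1) :
    c ∈ Ideal.jacobson (⊥ : Ideal R) := by
  have Hgen : ∀ p q : R, ∃ e : R, (1 - p * (c * q)) * e = 1 := by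
    intro p q
    apply jacobson_trick
    simpa [mul_assoc] using H (q * p)
  have Hleft : ∀ d : R, ∃ e : R, e * (1 - d * c) = 1 := by
    intro d
    obtain ⟨e, he⟩ := Hgen d 1
    rw [mul_one] at he
    have he2 : e = 1 - (-d) * (c * e) := by
      have h0 : e - (1 - (-d) * (c * e)) = (1 - d * c) * e - 1 := by noncomm_ring
      rw [he, sub_self] at h0
      exact sub_eq_zero.mp h0
    obtain ⟨f, hf⟩ := Hgen (-d) e
    rw [← he2] at hf
    refine ⟨e, ?_⟩
    calc e * (1 - d * c) = e * ((1 - d * c) * (e * f)) := by rw [hf, mul_one]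
      _ = e * (((1 - d * c) * e) * f) := by rw [mul_assoc]
      _ = e * f := by rw [he, one_mul]
      _ = 1 := hf
  rw [Ideal.jacobson]
  refine Ideal.mem_sInf.2 ?_
  rintro M ⟨-, hM⟩
  by_contra hc
  have hne : M ≠ M ⊔ Ideal.span {c} := by
    intro hMeq
    exact hc (hMeq ▸ Ideal.mem_sup_right (Ideal.mem_span_singleton_self c))
  have hsup : M ⊔ Ideal.span {c} = ⊤ :=
    hM.1.2 _ (lt_of_le_of_ne le_sup_left hne)
  have hone : (1 : R) ∈ M ⊔ Ideal.span {c} := by rw [hsup]; exact Submodule.mem_top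
  obtain ⟨m, hm, z, hz, hmz⟩ := Submodule.mem_sup.1 hone
  obtain ⟨d, hd⟩ := Ideal.mem_span_singleton'.1 hz
  have hm' : m = 1 - d * c := by rw [hd, eq_sub_iff_add_eq]; exact hmz
  obtain ⟨e, he⟩ := Hleft d
  have : (1 : R) ∈ M := by
    rw [← he, ← hm']
    exact M.mul_mem_left e hm
  exact hM.1.1 ((Ideal.eq_top_iff_one M).2 this)

/-- If `(a,b)` is a right coprime pair with `aR ∩ bR ⊄ J(R)`, then there is a right
coprime pair `(x,y)` strictly below `(a,b)` with moreover `x = a` or `y = b`. -/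
theorem exists_strictly_smaller_coprime {R : Type*} [Ring R] (a b : R)
    (hcop : ∃ r s : R, a * r + b * s = 1)
    (h : ∃ x : R, (∃ t : R, x = a * t) ∧ (∃ t : R, x = b * t) ∧
      x ∉ Ideal.jacobson (⊥ : Ideal R)) :
    ∃ x y : R, (∃ r s : R, x * r + y * s = 1) ∧
      rspan R x ≤ rspan R a ∧ rspan R y ≤ rspan R b ∧
      (rspan R x ≠ rspan R a ∨ rspan R y ≠ rspan R b) ∧
      (x = a ∨ y = b) := by
  obtain ⟨r, s, hrs⟩ := hcop
  obtain ⟨c, ⟨u, hu⟩, ⟨v, hv⟩, hcJ⟩ := h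
  subst hu
  have hd : ∃ d : R, ∀ e : R, (1 - a * u * d) * e ≠ 1 := by
    by_contra hcon
    push_neg at hcon
    exact hcJ (mem_jacobson_of_forall hcon)
  obtain ⟨d, hd⟩ := hd
  refine ⟨a, (1 - a * u * d) * b, ⟨u * d + r - u * d * (a * r), s, ?_⟩, le_refl _, ?_, ?_,
    Or.inl rfl⟩
  · calc a * (u * d + r - u * d * (a * r)) + (1 - a * u * d) * b * s
        = a * u * d + (a * r + b * s) - a * u * d * (a * r + b * s) := by noncomm_ring
      _ = 1 := by rw [hrs]; noncomm_ring
  · refine rspan_le_of_exists ⟨1 - v * d * b, ?_⟩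
    calc (1 - a * u * d) * b = b - a * u * d * b := by noncomm_ring
      _ = b - b * v * d * b := by rw [hv]
      _ = b * (1 - v * d * b) := by noncomm_ring
  · refine Or.inr fun heq => ?_
    have hb : b ∈ rspan R ((1 - a * u * d) * b) := by
      rw [heq]; exact Submodule.mem_span_singleton_self b
    obtain ⟨t, hb⟩ := mem_rspan_iff.1 hb
    refine hd (1 + b * t * v * d) ?_
    calc (1 - a * u * d) * (1 + b * t * v * d)
        = 1 - a * u * d + ((1 - a * u * d) * b * t) * v * d := by noncomm_ring
      _ = 1 - a * u * d + b * v * d := by rw [← hb]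
      _ = 1 - a * u * d + a * u * d := by rw [← hv]
      _ = 1 := by noncomm_ring
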